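/- For the hypercube graph Q_m (m ≥ 2), the excitation-state |B^2_{2^m}⟩ has two-party concurrence C_{vw} = 2^{3−m}/m between vertices at Hamming distance 2 and zero otherwise, and entanglement ratio Γ_v = 4(m−1)/((2^m−2)m), which tends to 0 as m → ∞. -/

import Mathlib

open scoped BigOperators
open Filter

/-- The hypercube graph `Q_m`: vertices are bit strings of length `m`, with
edges between vertices at Hamming distance `1`. -/
def cubeGraph (m : ℕ) : SimpleGraph (Fin m → Fin 2) :=
  SimpleGraph.fromRel (fun x y => hammingDist x y = 1)

noncomputable instance (m : ℕ) : DecidableRel (cubeGraph m).Adj :=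
  Classical.decRel _

/-- Joint neighborhood `n_{vw}`: number of common neighbors of `v` and `w`. -/
noncomputable def jointN {V : Type*} [Fintype V] (G : SimpleGraph V)
    [DecidableRel G.Adj] (v w : V) : ℕ :=
  (Finset.univ.filter (fun u => G.Adj v u ∧ G.Adj u w)).card

/-- Section `s_{vw}`: for a graph, `1` if `v` and `w` are adjacent, else `0`. -/
noncomputable def secN {V : Type*} (G : SimpleGraph V) [DecidableRel G.Adj]
    (v w : V) : ℕ :=
  if G.Adj v w then 1 else 0

/-- Two-party concurrence of the excitation-state of a graph, via the formula
`C_{vw} = max {0, (2/|E|)(n_{vw} − √(s_{vw}(|E| − d_v − d_w + s_{vw})))}`. -/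
noncomputable def conc {V : Type*} [Fintype V] [DecidableEq V] (G : SimpleGraph V)
    [DecidableRel G.Adj] (v w : V) : ℝ :=
  max 0 ((2 / (G.edgeFinset.card : ℝ)) *
    ((jointN G v w : ℝ) - Real.sqrt ((secN G v w : ℝ) *
      ((G.edgeFinset.card : ℝ) - (G.degree v : ℝ) - (G.degree w : ℝ) + (secN G v w : ℝ)))))

/-- Entanglement ratio `Γ_v = (Σ_{w≠v} C_{vw}²) / C_{v|rest}²`, with
`C_{v|rest}² = 4 d_v(|E| − d_v)/|E|²`. -/
noncomputable def gammaV {V : Type*} [Fintype V] [DecidableEq V] (G : SimpleGraph V)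
    [DecidableRel G.Adj] (v : V) : ℝ :=
  (∑ w ∈ Finset.univ.erase v, (conc G v w) ^ 2) /
    (4 * (G.degree v : ℝ) * ((G.edgeFinset.card : ℝ) - (G.degree v : ℝ)) /
      (G.edgeFinset.card : ℝ) ^ 2)

/-!
Identify a vertex `w` with the set `D = {i | v i ≠ w i}` of coordinates in which it differs from
a fixed `v`; the inverse map flips the bits of `v` in `D`. Then the distance-`k` sphere around `v`
corresponds to the `k`-subsets of coordinates, so `Q_m` is `m`-regular with `2^{m-1} m` edges.
A common neighbour of `v ≠ w` flips one bit of `v`, and is adjacent to `w` exactly when that bit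
lies in `D` and `|D| = 2`. Hence adjacent or distant pairs have no common neighbour and zero
concurrence, while distance-two pairs (non-adjacent, with two common neighbours) have
`C_{vw} = 4/|E| = 2^{3-m}/m`; summing `C_{vw}^2` over the `C(m,2)` such `w` gives `Γ_v`.
-/

open Finset

section BitFlips

variable {ι : Type*} [Fintype ι] [DecidableEq ι]

lemma Fin.two_add_one_eq_iff {x y : Fin 2} : x + 1 = y ↔ x ≠ y := by
  revert x y; decide

def flipBits (v : ι → Fin 2) (s : Finset ι) : ι → Fin 2 :=
  fun i => if i ∈ s then v i + 1 else v i

lemma filter_ne_flipBits (v : ι → Fin 2) (s : Finset ι) :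
    univ.filter (fun i => v i ≠ flipBits v s i) = s := by
  ext i
  by_cases hi : i ∈ s <;> simp [flipBits, hi]

lemma flipBits_filter_ne (v w : ι → Fin 2) :
    flipBits v (univ.filter fun i => v i ≠ w i) = w := by
  funext i
  by_cases hi : v i = w i <;> simp [flipBits, hi, Fin.two_add_one_eq_iff]

lemma card_hammingSphere (v : ι → Fin 2) (k : ℕ) :
    #(univ.filter fun w => hammingDist v w = k) = (Fintype.card ι).choose k := by
  rw [← card_univ, ← card_powersetCard]
  refine card_nbij' (fun w => univ.filter fun i => v i ≠ w i) (flipBits v) ?_ ?_ ?_ ?_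
  · intro w hw
    simpa [hammingDist] using hw
  · intro s hs
    simpa [hammingDist, filter_ne_flipBits] using hs
  · intro w _
    exact flipBits_filter_ne v w
  · intro s _
    exact filter_ne_flipBits v s

lemma hammingDist_flipBits_singleton (v w : ι → Fin 2) (i : ι) :
    hammingDist (flipBits v {i}) w =
      if v i = w i then hammingDist v w + 1 else hammingDist v w - 1 := by
  unfold hammingDist
  split_ifs with h
  · rw [← card_insert_of_notMem (s := univ.filter fun j => v j ≠ w j) (a := i) (by simp [h])]
    congr 1; ext j
    rcases eq_or_ne j i with rfl | hj <;> simp [flipBits, *]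
  · rw [← card_erase_of_mem (s := univ.filter fun j => v j ≠ w j) (a := i) (by simp [h])]
    congr 1; ext j
    rcases eq_or_ne j i with rfl | hj <;> simp [flipBits, *, Fin.two_add_one_eq_iff]

lemma hammingDist_eq_one_iff {v w : ι → Fin 2} :
    hammingDist v w = 1 ↔ ∃ i, flipBits v {i} = w := by
  constructor
  · intro h
    obtain ⟨i, hi⟩ := card_eq_one.mp h
    exact ⟨i, hi ▸ flipBits_filter_ne v w⟩
  · rintro ⟨i, rfl⟩
    simp [hammingDist, filter_ne_flipBits]

lemma flipBits_singleton_injective (v : ι → Fin 2) :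
    Function.Injective fun i => flipBits v {i} := by
  intro i j h
  simpa [filter_ne_flipBits] using congrArg (fun w => univ.filter fun k => v k ≠ w k) h

end BitFlips

section Hypercube

variable {m : ℕ}

lemma cubeGraph_adj {v w : Fin m → Fin 2} : (cubeGraph m).Adj v w ↔ hammingDist v w = 1 := by
  simp only [cubeGraph, SimpleGraph.fromRel_adj, hammingDist_comm w v, or_self,
    and_iff_right_iff_imp]
  rintro h rfl
  simp at h

lemma cubeGraph_neighborFinset (v : Fin m → Fin 2) :
    (cubeGraph m).neighborFinset v = univ.image fun i => flipBits v {i} := by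
  ext u
  simp [cubeGraph_adj, hammingDist_eq_one_iff]

lemma cubeGraph_degree (v : Fin m → Fin 2) : (cubeGraph m).degree v = m := by
  rw [SimpleGraph.degree, cubeGraph_neighborFinset,
    card_image_of_injective _ (flipBits_singleton_injective v), card_univ, Fintype.card_fin]

lemma two_mul_card_edgeFinset_cubeGraph : 2 * #(cubeGraph m).edgeFinset = 2 ^ m * m := by
  rw [← SimpleGraph.sum_degrees_eq_twice_card_edges]
  simp [cubeGraph_degree]

lemma cast_card_edgeFinset_cubeGraph :
    (#(cubeGraph m).edgeFinset : ℝ) = 2 ^ m * m / 2 := by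
  rw [eq_div_iff two_ne_zero, mul_comm]
  exact_mod_cast two_mul_card_edgeFinset_cubeGraph

lemma hammingDist_flipBits_singleton_eq_one_iff {v w : Fin m → Fin 2} (hvw : v ≠ w)
    (i : Fin m) :
    hammingDist (flipBits v {i}) w = 1 ↔ v i ≠ w i ∧ hammingDist v w = 2 := by
  have := hammingDist_pos.mpr hvw
  rw [hammingDist_flipBits_singleton]
  split_ifs with h
  · simp only [h, ne_eq, not_true_eq_false, false_and, iff_false]
    omega
  · simp only [h, ne_eq, not_false_eq_true, true_and]
    omega

lemma jointN_cubeGraph {v w : Fin m → Fin 2} (hvw : v ≠ w) :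
    jointN (cubeGraph m) v w = if hammingDist v w = 2 then 2 else 0 := by
  have hcommon : (univ.filter fun u => (cubeGraph m).Adj v u ∧ (cubeGraph m).Adj u w) =
      (univ.filter fun i => v i ≠ w i ∧ hammingDist v w = 2).image fun i => flipBits v {i} := by
    ext u
    simp only [mem_filter, mem_univ, true_and, mem_image, cubeGraph_adj]
    constructor
    · rintro ⟨hvu, hu⟩
      obtain ⟨i, rfl⟩ := hammingDist_eq_one_iff.mp hvu
      exact ⟨i, (hammingDist_flipBits_singleton_eq_one_iff hvw i).mp hu, rfl⟩
    · rintro ⟨i, hi, rfl⟩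
      exact ⟨hammingDist_eq_one_iff.mpr ⟨i, rfl⟩,
        (hammingDist_flipBits_singleton_eq_one_iff hvw i).mpr hi⟩
  rw [jointN, hcommon, card_image_of_injective _ (flipBits_singleton_injective v)]
  split_ifs with hd
  · simp only [hd, and_true]
    exact hd
  · simp [hd]

end Hypercube

section Concurrence

variable {V : Type*} [Fintype V] [DecidableEq V] {G : SimpleGraph V} [DecidableRel G.Adj]
  {v w : V}

lemma conc_eq_zero_of_jointN_eq_zero (h : jointN G v w = 0) : conc G v w = 0 := by
  refine max_eq_left (mul_nonpos_of_nonneg_of_nonpos (by positivity) ?_)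
  rw [h, Nat.cast_zero, zero_sub, neg_nonpos]
  exact Real.sqrt_nonneg _

lemma conc_eq_of_not_adj (h : ¬G.Adj v w) :
    conc G v w = 2 * jointN G v w / #G.edgeFinset := by
  rw [conc, secN, if_neg h, Nat.cast_zero, zero_mul, Real.sqrt_zero, sub_zero,
    max_eq_right (by positivity), div_mul_eq_mul_div]

end Concurrence

section HypercubeConcurrence

variable {m : ℕ}

lemma conc_cubeGraph {v w : Fin m → Fin 2} (hvw : v ≠ w) :
    conc (cubeGraph m) v w = if hammingDist v w = 2 then (8 / (2 ^ m * m) : ℝ) else 0 := by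
  split_ifs with hd
  · rw [conc_eq_of_not_adj (by simp [cubeGraph_adj, hd]), jointN_cubeGraph hvw, if_pos hd,
      cast_card_edgeFinset_cubeGraph, div_div_eq_mul_div]
    norm_num
  · exact conc_eq_zero_of_jointN_eq_zero (by simp [jointN_cubeGraph hvw, hd])

lemma sum_conc_sq_cubeGraph (v : Fin m → Fin 2) :
    ∑ w ∈ univ.erase v, conc (cubeGraph m) v w ^ 2 = m.choose 2 * (8 / (2 ^ m * m)) ^ 2 := by
  have hconc : ∀ w ∈ univ.erase v, conc (cubeGraph m) v w ^ 2 =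
      if hammingDist v w = 2 then (8 / (2 ^ m * m) : ℝ) ^ 2 else 0 := by
    intro w hw
    rw [conc_cubeGraph (ne_of_mem_erase hw).symm]
    split_ifs <;> simp
  rw [sum_congr rfl hconc, sum_erase _ (by simp), ← sum_filter, sum_const, nsmul_eq_mul,
    card_hammingSphere, Fintype.card_fin]

lemma gammaV_cubeGraph (hm : 2 ≤ m) (v : Fin m → Fin 2) :
    gammaV (cubeGraph m) v = 4 * ((m : ℝ) - 1) / (((2 : ℝ) ^ m - 2) * (m : ℝ)) := by
  rw [gammaV, sum_conc_sq_cubeGraph, cubeGraph_degree, cast_card_edgeFinset_cubeGraph,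
    Nat.cast_choose_two]
  have hm0 : (m : ℝ) ≠ 0 := by positivity
  have hpow : (4 : ℝ) ≤ 2 ^ m := by
    calc (4 : ℝ) = 2 ^ 2 := by norm_num
      _ ≤ 2 ^ m := pow_le_pow_right₀ (by norm_num) hm
  have hpow2 : (2 : ℝ) ^ m - 2 ≠ 0 := by linarith
  have hE : (2 : ℝ) ^ m * m / 2 - m ≠ 0 := by
    rw [show (2 : ℝ) ^ m * m / 2 - m = (2 ^ m - 2) * m / 2 by ring]
    positivity
  field_simp
  ring

end HypercubeConcurrence

lemma two_zpow_three_sub_div (m : ℕ) :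
    (2 : ℝ) ^ ((3 : ℤ) - m) / m = 8 / (2 ^ m * m) := by
  rw [zpow_sub₀ two_ne_zero, div_div]
  norm_num

lemma tendsto_entanglementRatio_cubeGraph :
    Tendsto (fun m : ℕ => 4 * ((m : ℝ) - 1) / (((2 : ℝ) ^ m - 2) * (m : ℝ)))
      atTop (nhds 0) := by
  have hnum : Tendsto (fun m : ℕ => 4 - 4 / (m : ℝ)) atTop (nhds (4 - 0)) :=
    tendsto_const_nhds.sub (tendsto_const_nhds.div_atTop tendsto_natCast_atTop_atTop)
  have hden : Tendsto (fun m : ℕ => (2 : ℝ) ^ m - 2) atTop atTop :=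
    tendsto_atTop_add_const_right _ _ (tendsto_pow_atTop_atTop_of_one_lt one_lt_two)
  refine (hnum.div_atTop hden).congr' ?_
  filter_upwards [eventually_ge_atTop 1] with m hm
  have hm0 : (m : ℝ) ≠ 0 := by positivity
  rw [mul_comm _ (m : ℝ), ← div_div, sub_div' hm0]
  ring_nf

/-- For the hypercube graph `Q_m` (`m ≥ 2`), the excitation-state
`|B²_{2^m}⟩` has two-party concurrence `2^{3−m}/m` between vertices at Hamming
distance `2` and zero otherwise, and entanglement ratio
`Γ_v = 4(m−1)/((2^m−2)m)`, which tends to `0` as `m → ∞`. -/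
theorem stmt18 (m : ℕ) (hm : 2 ≤ m) :
    (∀ v w : Fin m → Fin 2, v ≠ w →
      conc (cubeGraph m) v w =
        if hammingDist v w = 2 then (2 : ℝ) ^ ((3 : ℤ) - (m : ℤ)) / (m : ℝ) else 0) ∧
    (∀ v : Fin m → Fin 2,
      gammaV (cubeGraph m) v = 4 * ((m : ℝ) - 1) / (((2 : ℝ) ^ m - 2) * (m : ℝ))) ∧
    Tendsto (fun m : ℕ => 4 * ((m : ℝ) - 1) / (((2 : ℝ) ^ m - 2) * (m : ℝ)))
      atTop (nhds 0) := by
  refine ⟨fun v w hvw => ?_, gammaV_cubeGraph hm, tendsto_entanglementRatio_cubeGraph⟩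
  rw [conc_cubeGraph hvw, two_zpow_three_sub_div]
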